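/- Let G = G_l ⊙ G_r be a false twin composition, and assume D_k(H) ≠ ∅ for each H ∈ {G, G_l, G_r} and each 0 ≤ k ≤ |TS(H)|. Then min(G) = min(G_l) + min(G_r), α(G) = α(G_l) + α(G_r), and β(G) = β(G_l) + β(G_r). -/

import Mathlib

/-- A finite simple graph on a subset of an ambient vertex type `α`,
together with a designated twin set `TS ⊆ verts`. -/
structure TSGraph (α : Type*) where
  verts : Finset α
  Adj : α → α → Prop
  symm : ∀ u v, Adj u v → Adj v u
  irrefl : ∀ u, ¬ Adj u u
  adj_mem : ∀ u v, Adj u v → u ∈ verts ∧ v ∈ verts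
  TS : Finset α
  TS_sub : TS ⊆ verts

namespace TSGraph

variable {α : Type*} [DecidableEq α]

/-- `f` encodes a perfect matching of the subgraph of `G` induced by `S`:
every vertex of `S` is paired with an adjacent vertex of `S`, involutively. -/
def IsPM (G : TSGraph α) (S : Finset α) (f : α → α) : Prop :=
  ∀ v ∈ S, f v ∈ S ∧ G.Adj v (f v) ∧ f (f v) = v

/-- `S ⊆ V(G)` dominates `V(G) − TS(G)` and, for some `X ⊆ S ∩ TS(G)` of size `k`,
the subgraph induced by `S − X` has a perfect matching. -/
def Adm (G : TSGraph α) (k : ℕ) (S : Finset α) : Prop :=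
  S ⊆ G.verts ∧
  (∀ v ∈ G.verts, v ∉ G.TS → v ∈ S ∨ ∃ u ∈ S, G.Adj u v) ∧
  ∃ X ⊆ S ∩ G.TS, X.card = k ∧ ∃ f, G.IsPM (S \ X) f

/-- Membership in the family `D_k(G)`: admissible of minimum cardinality. -/
def memD (G : TSGraph α) (k : ℕ) (S : Finset α) : Prop :=
  G.Adm k S ∧ ∀ S', G.Adm k S' → S.card ≤ S'.card

/-- `D_k(G) ≠ ∅`. -/
def DkNonempty (G : TSGraph α) (k : ℕ) : Prop := ∃ S, G.memD k S

/-- `D_k(G) ≠ ∅` for all `0 ≤ k ≤ |TS(G)|`. -/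
def AllDkNonempty (G : TSGraph α) : Prop := ∀ k ≤ G.TS.card, G.DkNonempty k

/-- `γ_k(G)`: the common cardinality of the members of `D_k(G)`. -/
noncomputable def gamma (G : TSGraph α) (k : ℕ) : ℕ :=
  sInf {n | ∃ S, G.Adm k S ∧ S.card = n}

/-- A paired-dominating set of `G`. -/
def IsPDS (G : TSGraph α) (D : Finset α) : Prop :=
  D ⊆ G.verts ∧
  (∀ v ∈ G.verts, v ∈ D ∨ ∃ u ∈ D, G.Adj u v) ∧
  ∃ f, G.IsPM D f

/-- `γ_p(G)`: the paired-domination number. -/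
noncomputable def gammaP (G : TSGraph α) : ℕ :=
  sInf {n | ∃ D, G.IsPDS D ∧ D.card = n}

/-- Membership in `D_p(G)`: minimum-cardinality paired-dominating sets. -/
def memDp (G : TSGraph α) (D : Finset α) : Prop :=
  G.IsPDS D ∧ D.card = G.gammaP

/-- `min(G) = min { γ_k(G) : 0 ≤ k ≤ |TS(G)| }`. -/
noncomputable def minVal (G : TSGraph α) : ℕ :=
  sInf {n | ∃ k ≤ G.TS.card, G.gamma k = n}

/-- `α(G)`: the smallest `k` with `γ_k(G) = min(G)`. -/
noncomputable def alphaVal (G : TSGraph α) : ℕ :=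
  sInf {k | k ≤ G.TS.card ∧ G.gamma k = G.minVal}

/-- `β(G)`: the largest `k` with `γ_k(G) = min(G)`. -/
noncomputable def betaVal (G : TSGraph α) : ℕ :=
  sSup {k | k ≤ G.TS.card ∧ G.gamma k = G.minVal}

/-- Membership in `Ψ(G)`: sets in some `D_k(G)` of cardinality `min(G)`. -/
def memPsi (G : TSGraph α) (D : Finset α) : Prop :=
  (∃ k, k ≤ G.TS.card ∧ G.memD k D) ∧ D.card = G.minVal

/-- Equation (2) holds for `G`. -/
def Eq2Holds (G : TSGraph α) : Prop :=
  ∀ k ≤ G.TS.card,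
    (k ≤ G.alphaVal → G.gamma k = G.minVal + G.alphaVal - k) ∧
    (G.betaVal ≤ k → G.gamma k = G.minVal + k - G.betaVal) ∧
    (G.alphaVal < k → k < G.betaVal → Even (k - G.alphaVal) → G.gamma k = G.minVal) ∧
    (G.alphaVal < k → k < G.betaVal → ¬ Even (k - G.alphaVal) → G.gamma k = G.minVal + 1)

/-- `G = Gl ⊗ Gr` (true twin composition). -/
def IsTrueTwin (G Gl Gr : TSGraph α) : Prop :=
  Disjoint Gl.verts Gr.verts ∧
  G.verts = Gl.verts ∪ Gr.verts ∧
  (∀ u v, G.Adj u v ↔ Gl.Adj u v ∨ Gr.Adj u v ∨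
    (u ∈ Gl.TS ∧ v ∈ Gr.TS) ∨ (u ∈ Gr.TS ∧ v ∈ Gl.TS)) ∧
  G.TS = Gl.TS ∪ Gr.TS

/-- `G = Gl ⊙ Gr` (false twin composition). -/
def IsFalseTwin (G Gl Gr : TSGraph α) : Prop :=
  Disjoint Gl.verts Gr.verts ∧
  G.verts = Gl.verts ∪ Gr.verts ∧
  (∀ u v, G.Adj u v ↔ Gl.Adj u v ∨ Gr.Adj u v) ∧
  G.TS = Gl.TS ∪ Gr.TS

/-- `G = Gl ⊕ Gr` (attachment composition). -/
def IsAttach (G Gl Gr : TSGraph α) : Prop :=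
  Disjoint Gl.verts Gr.verts ∧
  G.verts = Gl.verts ∪ Gr.verts ∧
  (∀ u v, G.Adj u v ↔ Gl.Adj u v ∨ Gr.Adj u v ∨
    (u ∈ Gl.TS ∧ v ∈ Gr.TS) ∨ (u ∈ Gr.TS ∧ v ∈ Gl.TS)) ∧
  G.TS = Gl.TS

/-- The twin-set graph `G` arises from a decomposition tree all of whose associated
twin-set graphs satisfy the property `P`. -/
inductive FromDecompTree (P : TSGraph α → Prop) : TSGraph α → Prop where
  | single (G : TSGraph α) (v : α) (hv : G.verts = {v}) (hts : G.TS = {v})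
      (hadj : ∀ u w, ¬ G.Adj u w) (hP : P G) : FromDecompTree P G
  | ttwin (G Gl Gr : TSGraph α) (hl : FromDecompTree P Gl) (hr : FromDecompTree P Gr)
      (h : IsTrueTwin G Gl Gr) (hP : P G) : FromDecompTree P G
  | ftwin (G Gl Gr : TSGraph α) (hl : FromDecompTree P Gl) (hr : FromDecompTree P Gr)
      (h : IsFalseTwin G Gl Gr) (hP : P G) : FromDecompTree P G
  | attach (G Gl Gr : TSGraph α) (hl : FromDecompTree P Gl) (hr : FromDecompTree P Gr)
      (h : IsAttach G Gl Gr) (hP : P G) : FromDecompTree P G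

end TSGraph

/-! In `G = Gl ⊙ Gr` no edge joins the two sides, so `S ↦ (S ∩ V(Gl), S ∩ V(Gr))` and
`(Sl, Sr) ↦ Sl ∪ Sr` turn sets admissible for `k` in `G` into sets admissible for `kl`, `kr`
with `kl + kr = k`, and back, preserving cardinality. Hence `γ_k(G)` is the infimal convolution
`min_{kl + kr = k} γ_kl(Gl) + γ_kr(Gr)`: its minimum is `min(Gl) + min(Gr)`, and it is attained
exactly at the sums `kl + kr` of indices where `γ(Gl)` and `γ(Gr)` attain theirs. `α` and `β`
are the least and greatest elements of this sumset. -/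

open Finset
open scoped Pointwise

theorem IsLeast.add {M : Type*} [Add M] [Preorder M] [AddLeftMono M] [AddRightMono M]
    {s t : Set M} {a b : M} (ha : IsLeast s a) (hb : IsLeast t b) : IsLeast (s + t) (a + b) :=
  ⟨Set.add_mem_add ha.1 hb.1, add_mem_lowerBounds_add ha.2 hb.2⟩

theorem IsGreatest.add {M : Type*} [Add M] [Preorder M] [AddLeftMono M] [AddRightMono M]
    {s t : Set M} {a b : M} (ha : IsGreatest s a) (hb : IsGreatest t b) :
    IsGreatest (s + t) (a + b) :=
  ⟨Set.add_mem_add ha.1 hb.1, add_mem_upperBounds_add ha.2 hb.2⟩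

namespace TSGraph

variable {α : Type*} [DecidableEq α] {G : TSGraph α} {k : ℕ} {S : Finset α}

theorem gamma_le_card (h : G.Adm k S) : G.gamma k ≤ S.card :=
  Nat.sInf_le ⟨S, h, rfl⟩

theorem exists_adm_card_eq_gamma (h : ∃ S, G.Adm k S) : ∃ S, G.Adm k S ∧ S.card = G.gamma k := by
  obtain ⟨S, hS⟩ := h
  exact Nat.sInf_mem (s := {n | ∃ S, G.Adm k S ∧ S.card = n}) ⟨S.card, S, hS, rfl⟩

theorem Adm.le_card_TS (h : G.Adm k S) : k ≤ G.TS.card := by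
  obtain ⟨-, -, X, hX, rfl, -⟩ := h
  exact card_le_card (hX.trans inter_subset_right)

theorem AllDkNonempty.exists_adm (h : G.AllDkNonempty) (hk : k ≤ G.TS.card) :
    ∃ S, G.Adm k S :=
  (h k hk).imp fun _ => And.left

theorem minVal_le_gamma (hk : k ≤ G.TS.card) : G.minVal ≤ G.gamma k :=
  Nat.sInf_le ⟨k, hk, rfl⟩

theorem exists_gamma_eq_minVal (G : TSGraph α) : ∃ k ≤ G.TS.card, G.gamma k = G.minVal :=
  Nat.sInf_mem (s := {n | ∃ k ≤ G.TS.card, G.gamma k = n}) ⟨G.gamma 0, 0, Nat.zero_le _, rfl⟩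

def minIndices (G : TSGraph α) : Set ℕ := {k | k ≤ G.TS.card ∧ G.gamma k = G.minVal}

theorem minIndices_nonempty (G : TSGraph α) : G.minIndices.Nonempty :=
  G.exists_gamma_eq_minVal

theorem isLeast_alphaVal (G : TSGraph α) : IsLeast G.minIndices G.alphaVal :=
  isLeast_csInf G.minIndices_nonempty

theorem isGreatest_betaVal (G : TSGraph α) : IsGreatest G.minIndices G.betaVal :=
  have hbdd : BddAbove G.minIndices := ⟨G.TS.card, fun _ hk => hk.1⟩
  ⟨Nat.sSup_mem G.minIndices_nonempty hbdd, fun _ hk => le_csSup hbdd hk⟩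

namespace IsFalseTwin

variable {Gl Gr : TSGraph α}

theorem symm (h : IsFalseTwin G Gl Gr) : IsFalseTwin G Gr Gl := by
  obtain ⟨hdisj, hV, hA, hT⟩ := h
  exact ⟨hdisj.symm, union_comm Gl.verts _ ▸ hV, fun u v => (hA u v).trans or_comm,
    union_comm Gl.TS _ ▸ hT⟩

theorem card_TS (h : IsFalseTwin G Gl Gr) : G.TS.card = Gl.TS.card + Gr.TS.card := by
  rw [h.2.2.2, card_union_of_disjoint (h.1.mono Gl.TS_sub Gr.TS_sub)]

theorem card_eq_add (h : IsFalseTwin G Gl Gr) (hS : S ⊆ G.verts) :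
    S.card = (S ∩ Gl.verts).card + (S ∩ Gr.verts).card := by
  rw [← card_union_of_disjoint (h.1.mono inter_subset_right inter_subset_right),
    ← inter_union_distrib_left, inter_eq_left.2 (h.2.1 ▸ hS)]

theorem mem_TS_iff_left (h : IsFalseTwin G Gl Gr) {v : α} (hv : v ∈ Gl.verts) :
    v ∈ G.TS ↔ v ∈ Gl.TS := by
  rw [h.2.2.2, mem_union, or_iff_left fun hr => disjoint_left.1 h.1 hv (Gr.TS_sub hr)]

theorem adj_iff_left (h : IsFalseTwin G Gl Gr) {u v : α} (huv : u ∈ Gl.verts ∨ v ∈ Gl.verts) :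
    G.Adj u v ↔ Gl.Adj u v := by
  rw [h.2.2.1, or_iff_left]
  intro hr
  have hmem := Gr.adj_mem u v hr
  rcases huv with hu | hv
  exacts [disjoint_left.1 h.1 hu hmem.1, disjoint_left.1 h.1 hv hmem.2]

theorem adm_inter_left (h : IsFalseTwin G Gl Gr) {X : Finset α} {f : α → α}
    (hdom : ∀ v ∈ G.verts, v ∉ G.TS → v ∈ S ∨ ∃ u ∈ S, G.Adj u v)
    (hX : X ⊆ S ∩ G.TS) (hf : G.IsPM (S \ X) f) :
    Gl.Adm (X ∩ Gl.verts).card (S ∩ Gl.verts) := by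
  refine ⟨inter_subset_right, fun v hv hvTS => ?_, X ∩ Gl.verts, fun x hx => ?_, rfl, f,
    fun v hv => ?_⟩
  · have hvG : v ∈ G.verts := h.2.1 ▸ mem_union_left _ hv
    rcases hdom v hvG (by rwa [h.mem_TS_iff_left hv]) with hvS | ⟨u, huS, huv⟩
    · exact Or.inl (mem_inter.2 ⟨hvS, hv⟩)
    · have huv' := (h.adj_iff_left (Or.inr hv)).1 huv
      exact Or.inr ⟨u, mem_inter.2 ⟨huS, (Gl.adj_mem u v huv').1⟩, huv'⟩
  · obtain ⟨hxX, hxl⟩ := mem_inter.1 hx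
    obtain ⟨hxS, hxT⟩ := mem_inter.1 (hX hxX)
    exact mem_inter.2 ⟨mem_inter.2 ⟨hxS, hxl⟩, (h.mem_TS_iff_left hxl).1 hxT⟩
  · simp only [mem_sdiff, mem_inter, not_and] at hv ⊢
    obtain ⟨⟨hvS, hvl⟩, hvX⟩ := hv
    obtain ⟨hfv, hadj, hff⟩ := hf v (mem_sdiff.2 ⟨hvS, fun hx => hvX hx hvl⟩)
    have hadj' := (h.adj_iff_left (Or.inl hvl)).1 hadj
    exact ⟨⟨⟨(mem_sdiff.1 hfv).1, (Gl.adj_mem _ _ hadj').2⟩, fun hx _ => (mem_sdiff.1 hfv).2 hx⟩,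
      hadj', hff⟩

theorem exists_adm_inter (h : IsFalseTwin G Gl Gr) (hS : G.Adm k S) :
    ∃ kl kr, kl + kr = k ∧ Gl.Adm kl (S ∩ Gl.verts) ∧ Gr.Adm kr (S ∩ Gr.verts) := by
  obtain ⟨hsub, hdom, X, hX, rfl, f, hf⟩ := hS
  refine ⟨_, _, ?_, h.adm_inter_left hdom hX hf, h.symm.adm_inter_left hdom hX hf⟩
  exact (h.card_eq_add ((hX.trans inter_subset_left).trans hsub)).symm

theorem isPM_union (h : IsFalseTwin G Gl Gr) {Tl Tr : Finset α} {fl fr : α → α}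
    (hl : Gl.IsPM Tl fl) (hr : Gr.IsPM Tr fr) :
    G.IsPM (Tl ∪ Tr) (fun v => if v ∈ Gl.verts then fl v else fr v) := by
  intro v hv
  rcases mem_union.1 hv with hv | hv
  · obtain ⟨hfv, hadj, hff⟩ := hl v hv
    simp only [if_pos (Gl.adj_mem _ _ hadj).1, if_pos (Gl.adj_mem _ _ hadj).2]
    exact ⟨mem_union_left _ hfv, (h.2.2.1 _ _).2 (Or.inl hadj), hff⟩
  · obtain ⟨hfv, hadj, hff⟩ := hr v hv
    have hnot : ∀ {w}, Gr.Adj v w → w ∉ Gl.verts ∧ v ∉ Gl.verts := fun hw =>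
      ⟨disjoint_right.1 h.1 (Gr.adj_mem _ _ hw).2, disjoint_right.1 h.1 (Gr.adj_mem _ _ hw).1⟩
    simp only [if_neg (hnot hadj).1, if_neg (hnot hadj).2]
    exact ⟨mem_union_right _ hfv, (h.2.2.1 _ _).2 (Or.inr hadj), hff⟩

theorem adm_union (h : IsFalseTwin G Gl Gr) {kl kr : ℕ} {Sl Sr : Finset α}
    (hl : Gl.Adm kl Sl) (hr : Gr.Adm kr Sr) : G.Adm (kl + kr) (Sl ∪ Sr) := by
  obtain ⟨hsubl, hdoml, Xl, hXl, rfl, fl, hfl⟩ := hl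
  obtain ⟨hsubr, hdomr, Xr, hXr, rfl, fr, hfr⟩ := hr
  have hXlr : Disjoint Xl Sr := h.1.mono ((hXl.trans inter_subset_left).trans hsubl) hsubr
  have hXrl : Disjoint Xr Sl := h.1.symm.mono ((hXr.trans inter_subset_left).trans hsubr) hsubl
  refine ⟨h.2.1 ▸ union_subset_union hsubl hsubr, fun v hv hvTS => ?_, Xl ∪ Xr, ?_,
    card_union_of_disjoint (hXlr.mono_right ((hXr.trans inter_subset_left))),
    fun v => if v ∈ Gl.verts then fl v else fr v, ?_⟩
  · rcases mem_union.1 (h.2.1 ▸ hv) with hvl | hvr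
    · rcases hdoml v hvl (by rwa [← h.mem_TS_iff_left hvl]) with hvS | ⟨u, huS, huv⟩
      · exact Or.inl (mem_union_left _ hvS)
      · exact Or.inr ⟨u, mem_union_left _ huS, (h.2.2.1 u v).2 (Or.inl huv)⟩
    · rcases hdomr v hvr (by rwa [← h.symm.mem_TS_iff_left hvr]) with hvS | ⟨u, huS, huv⟩
      · exact Or.inl (mem_union_right _ hvS)
      · exact Or.inr ⟨u, mem_union_right _ huS, (h.2.2.1 u v).2 (Or.inr huv)⟩
  · rw [h.2.2.2]
    exact union_subset (hXl.trans (inter_subset_inter subset_union_left subset_union_left))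
      (hXr.trans (inter_subset_inter subset_union_right subset_union_right))
  · have hsplit : (Sl ∪ Sr) \ (Xl ∪ Xr) = Sl \ Xl ∪ Sr \ Xr := by
      ext v
      have : v ∈ Xl → v ∉ Sr := fun hv => disjoint_left.1 hXlr hv
      have : v ∈ Xr → v ∉ Sl := fun hv => disjoint_left.1 hXrl hv
      simp only [mem_sdiff, mem_union]
      tauto
    exact hsplit ▸ h.isPM_union hfl hfr

theorem exists_gamma_add_le (h : IsFalseTwin G Gl Gr) (hk : ∃ S, G.Adm k S) :
    ∃ kl kr, kl + kr = k ∧ kl ≤ Gl.TS.card ∧ kr ≤ Gr.TS.card ∧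
      Gl.gamma kl + Gr.gamma kr ≤ G.gamma k := by
  obtain ⟨S, hS, hcard⟩ := exists_adm_card_eq_gamma hk
  obtain ⟨kl, kr, hsum, hl, hr⟩ := h.exists_adm_inter hS
  refine ⟨kl, kr, hsum, hl.le_card_TS, hr.le_card_TS, ?_⟩
  calc Gl.gamma kl + Gr.gamma kr ≤ (S ∩ Gl.verts).card + (S ∩ Gr.verts).card :=
        add_le_add (gamma_le_card hl) (gamma_le_card hr)
    _ = G.gamma k := by rw [← h.card_eq_add hS.1, hcard]

theorem gamma_add_le (h : IsFalseTwin G Gl Gr) {kl kr : ℕ} (hl : ∃ S, Gl.Adm kl S)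
    (hr : ∃ S, Gr.Adm kr S) : G.gamma (kl + kr) ≤ Gl.gamma kl + Gr.gamma kr := by
  obtain ⟨Sl, hSl, hcardl⟩ := exists_adm_card_eq_gamma hl
  obtain ⟨Sr, hSr, hcardr⟩ := exists_adm_card_eq_gamma hr
  calc G.gamma (kl + kr) ≤ (Sl ∪ Sr).card := gamma_le_card (h.adm_union hSl hSr)
    _ = Gl.gamma kl + Gr.gamma kr := by
      rw [card_union_of_disjoint (h.1.mono hSl.1 hSr.1), hcardl, hcardr]

theorem minVal_eq (h : IsFalseTwin G Gl Gr) (hG : G.AllDkNonempty) (hGl : Gl.AllDkNonempty)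
    (hGr : Gr.AllDkNonempty) : G.minVal = Gl.minVal + Gr.minVal := by
  apply le_antisymm
  · obtain ⟨kl, hkl, hgl⟩ := Gl.exists_gamma_eq_minVal
    obtain ⟨kr, hkr, hgr⟩ := Gr.exists_gamma_eq_minVal
    calc G.minVal ≤ G.gamma (kl + kr) := minVal_le_gamma (by rw [h.card_TS]; omega)
      _ ≤ Gl.gamma kl + Gr.gamma kr := h.gamma_add_le (hGl.exists_adm hkl) (hGr.exists_adm hkr)
      _ = Gl.minVal + Gr.minVal := by rw [hgl, hgr]
  · obtain ⟨k, hk, hgk⟩ := G.exists_gamma_eq_minVal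
    obtain ⟨kl, kr, -, hkl, hkr, hle⟩ := h.exists_gamma_add_le (hG.exists_adm hk)
    have := minVal_le_gamma hkl
    have := minVal_le_gamma hkr
    omega

theorem minIndices_eq (h : IsFalseTwin G Gl Gr) (hG : G.AllDkNonempty)
    (hGl : Gl.AllDkNonempty) (hGr : Gr.AllDkNonempty) :
    G.minIndices = Gl.minIndices + Gr.minIndices := by
  have hmin := h.minVal_eq hG hGl hGr
  ext k
  simp only [minIndices, Set.mem_add, Set.mem_ofPred_eq]
  constructor
  · rintro ⟨hk, hgk⟩
    obtain ⟨kl, kr, hsum, hkl, hkr, hle⟩ := h.exists_gamma_add_le (hG.exists_adm hk)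
    have := minVal_le_gamma hkl
    have := minVal_le_gamma hkr
    exact ⟨kl, ⟨hkl, by omega⟩, kr, ⟨hkr, by omega⟩, hsum⟩
  · rintro ⟨kl, ⟨hkl, hgl⟩, kr, ⟨hkr, hgr⟩, rfl⟩
    have hk : kl + kr ≤ G.TS.card := by rw [h.card_TS]; omega
    refine ⟨hk, le_antisymm ?_ (minVal_le_gamma hk)⟩
    calc G.gamma (kl + kr) ≤ Gl.gamma kl + Gr.gamma kr :=
          h.gamma_add_le (hGl.exists_adm hkl) (hGr.exists_adm hkr)
      _ = G.minVal := by rw [hgl, hgr, hmin]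

end IsFalseTwin

end TSGraph

open TSGraph in
/-- For a false twin composition `G = Gl ⊙ Gr` with all `D_k`
families nonempty, `min(G) = min(Gl) + min(Gr)`, `α(G) = α(Gl) + α(Gr)`, and
`β(G) = β(Gl) + β(Gr)`. -/
theorem stmt14 {α : Type*} [DecidableEq α] (G Gl Gr : TSGraph α)
    (hcomp : IsFalseTwin G Gl Gr)
    (hG : G.AllDkNonempty) (hGl : Gl.AllDkNonempty) (hGr : Gr.AllDkNonempty) :
    G.minVal = Gl.minVal + Gr.minVal ∧
    G.alphaVal = Gl.alphaVal + Gr.alphaVal ∧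
    G.betaVal = Gl.betaVal + Gr.betaVal := by
  have hidx := hcomp.minIndices_eq hG hGl hGr
  refine ⟨hcomp.minVal_eq hG hGl hGr, ?_, ?_⟩
  · exact G.isLeast_alphaVal.unique (hidx ▸ Gl.isLeast_alphaVal.add Gr.isLeast_alphaVal)
  · exact G.isGreatest_betaVal.unique (hidx ▸ Gl.isGreatest_betaVal.add Gr.isGreatest_betaVal)
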